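/- Let R be a commutative ring of prime characteristic p, and let D, E be derivations of R. If the commutator [D,E] = DE - ED is again a derivation (which it always is), then the p-th iterate D^p of a derivation D is again a derivation of R. -/
import Mathlib

open Finset in
lemma my_iterate_leibniz {R : Type*} [CommRing R] (D : Derivation ℤ R R) (n : ℕ) (p q : R) :
    (⇑D)^[n] (p * q) =
      ∑ k ∈ range n.succ, (n.choose k • ((⇑D)^[n - k] p * (⇑D)^[k] q)) := by
  have hmul : ∀ x y : R, D (x * y) = D x * y + x * D y := by
    intro x y; rw [D.leibniz]; simp only [smul_eq_mul]; ring
  induction n with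
  | zero =>
    simp [Finset.range]
  | succ n IH =>
    calc
      (⇑D)^[n + 1] (p * q) =
          D (∑ k ∈ range n.succ,
              n.choose k • ((⇑D)^[n - k] p * (⇑D)^[k] q)) := by
        rw [Function.iterate_succ_apply', IH]
      _ = (∑ k ∈ range n.succ,
            n.choose k • ((⇑D)^[n - k + 1] p * (⇑D)^[k] q)) +
          ∑ k ∈ range n.succ,
            n.choose k • ((⇑D)^[n - k] p * (⇑D)^[k + 1] q) := by
        simp_rw [map_sum, map_nsmul, hmul, Function.iterate_succ_apply',
          smul_add, sum_add_distrib]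
      _ = (∑ k ∈ range n.succ,
                n.choose k.succ • ((⇑D)^[n - k] p * (⇑D)^[k + 1] q)) +
              1 • ((⇑D)^[n + 1] p * (⇑D)^[0] q) +
            ∑ k ∈ range n.succ, n.choose k • ((⇑D)^[n - k] p * (⇑D)^[k + 1] q) :=
        ?_
      _ = ((∑ k ∈ range n.succ, n.choose k • ((⇑D)^[n - k] p * (⇑D)^[k + 1] q)) +
              ∑ k ∈ range n.succ,
                n.choose k.succ • ((⇑D)^[n - k] p * (⇑D)^[k + 1] q)) +
            1 • ((⇑D)^[n + 1] p * (⇑D)^[0] q) := by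
        rw [add_comm, add_assoc]
      _ = (∑ i ∈ range n.succ,
              (n + 1).choose (i + 1) • ((⇑D)^[n + 1 - (i + 1)] p * (⇑D)^[i + 1] q)) +
            1 • ((⇑D)^[n + 1] p * (⇑D)^[0] q) := by
        simp_rw [Nat.choose_succ_succ, Nat.succ_sub_succ, add_smul, sum_add_distrib]
      _ = ∑ k ∈ range n.succ.succ,
            n.succ.choose k • ((⇑D)^[n.succ - k] p * (⇑D)^[k] q) := by
        rw [sum_range_succ' _ n.succ, Nat.choose_zero_right, tsub_zero]
    congr
    refine (sum_range_succ' _ _).trans (congr_arg₂ (· + ·) ?_ ?_)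
    · rw [sum_range_succ, Nat.choose_succ_self, zero_smul, add_zero]
      refine sum_congr rfl fun k hk => ?_
      rw [mem_range] at hk
      congr
      omega
    · rw [Nat.choose_zero_right, tsub_zero]

/-- In characteristic `p`, the commutator of two derivations is a derivation (always true),
and the `p`-th iterate of a derivation is again a derivation. -/
theorem stmt_0 {R : Type*} [CommRing R] (p : ℕ) (hp : p.Prime) [CharP R p]
    (D E : Derivation ℤ R R) :
    (∃ C : Derivation ℤ R R, ∀ a : R, C a = D (E a) - E (D a)) ∧
    (∃ F : Derivation ℤ R R, ∀ a : R, F a = (⇑D)^[p] a) := by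
  constructor
  · exact ⟨⁅D, E⁆, fun a => rfl⟩
  · have key : ∀ a b : R, (⇑D)^[p] (a * b) = a * (⇑D)^[p] b + b * (⇑D)^[p] a := by
      intro a b
      obtain ⟨m, hm⟩ : ∃ m, p = m + 1 := ⟨p - 1, (Nat.succ_pred_eq_of_pos hp.pos).symm⟩
      rw [my_iterate_leibniz, Finset.sum_range_succ, hm, Finset.sum_range_succ']
      have hmid : ∀ k ∈ Finset.range m,
          (m + 1).choose (k + 1) • ((⇑D)^[m + 1 - (k + 1)] a * (⇑D)^[k + 1] b) = 0 := by
        intro k hk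
        rw [Finset.mem_range] at hk
        rw [← hm]
        have h1 : (p : R) ∣ (p.choose (k + 1) : R) :=
          Nat.cast_dvd_cast (hp.dvd_choose_self (by omega) (by omega))
        obtain ⟨c, hc⟩ := h1
        rw [nsmul_eq_mul, hc, CharP.cast_eq_zero R p, zero_mul, zero_mul]
      rw [Finset.sum_eq_zero hmid]
      simp only [zero_add, Nat.choose_self, Nat.choose_zero_right, one_smul,
        Nat.sub_self, Nat.sub_zero, Function.iterate_zero, id_eq, ← hm]
      ring
    refine ⟨{ toLinearMap := (D.toLinearMap ^ p), map_one_eq_zero' := ?_, leibniz' := ?_ },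
      fun a => by exact Module.End.pow_apply _ _ _⟩
    · show ((D.toLinearMap : R →ₗ[ℤ] R) ^ p) 1 = 0
      rw [Module.End.pow_apply]
      obtain ⟨m, hm⟩ : ∃ m, p = m + 1 := ⟨p - 1, (Nat.succ_pred_eq_of_pos hp.pos).symm⟩
      subst hm
      rw [Function.iterate_succ_apply]
      simp
    · intro a b
      show ((D.toLinearMap : R →ₗ[ℤ] R) ^ p) (a * b) = _
      simp only [Module.End.pow_apply, Derivation.coeFn_coe]
      rw [key]
      simp [smul_eq_mul]
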